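/- For simplicial maps φ₁,...,φₙ : K → K', SD(φ₁,...,φₙ) = 0 if and only if φᵢ ∼ φ_{i+1} (same contiguity class) for each i ∈ {1,...,n−1}. -/

import Mathlib

/-- An abstract simplicial complex on vertex type `V`. -/
structure ASC (V : Type) where
  faces : Set (Finset V)
  nonempty_of_mem : ∀ {s : Finset V}, s ∈ faces → s.Nonempty
  down_closed : ∀ {s t : Finset V}, s ∈ faces → t ⊆ s → t.Nonempty → t ∈ faces

/-- A simplicial map between abstract simplicial complexes. -/
structure SMap {V W : Type} [DecidableEq W] (K : ASC V) (L : ASC W) where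
  toFun : V → W
  maps_faces : ∀ {s : Finset V}, s ∈ K.faces → s.image toFun ∈ L.faces

namespace SMap

variable {V W U : Type} [DecidableEq V] [DecidableEq W] [DecidableEq U]
  {K : ASC V} {L : ASC W} {M : ASC U}

/-- The identity simplicial map. -/
def id (K : ASC V) : SMap K K :=
  ⟨fun v => v, by intro s hs; simpa using hs⟩

/-- Composition of simplicial maps. -/
def comp (ψ : SMap L M) (φ : SMap K L) : SMap K M :=
  ⟨ψ.toFun ∘ φ.toFun, by
    intro s hs
    have h := ψ.maps_faces (φ.maps_faces hs)
    simpa [Finset.image_image] using h⟩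

end SMap

/-- Two simplicial maps are contiguous if the images of each simplex under the two
maps together span a simplex. -/
def Contiguous {V W : Type} [DecidableEq W] {K : ASC V} {L : ASC W}
    (φ ψ : SMap K L) : Prop :=
  ∀ {s : Finset V}, s ∈ K.faces → (s.image φ.toFun ∪ s.image ψ.toFun) ∈ L.faces

/-- Being in the same contiguity class: the reflexive-transitive closure of
contiguity (`φ ∼ ψ`). -/
def CClass {V W : Type} [DecidableEq W] {K : ASC V} {L : ASC W}
    (φ ψ : SMap K L) : Prop :=
  Relation.ReflTransGen Contiguous φ ψ

/-- The type of subcomplexes of `K`. -/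
def ASC.Sub {V : Type} (K : ASC V) : Type :=
  {Ω : ASC V // Ω.faces ⊆ K.faces}

/-- Restriction of a simplicial map to a subcomplex of the domain. -/
def SMap.restrict {V W : Type} [DecidableEq W] {K : ASC V} {L : ASC W}
    (φ : SMap K L) (Ω : K.Sub) : SMap Ω.1 L :=
  ⟨φ.toFun, by intro s hs; exact φ.maps_faces (Ω.2 hs)⟩

/-- `SDle φ k` : the family `φ` has contiguity distance at most `k`, witnessed by a
cover of `K` by `k+1` subcomplexes on each of which all the maps restrict into a
single contiguity class. -/
def SDle {V W : Type} [DecidableEq W] {K : ASC V} {L : ASC W} {n : ℕ}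
    (φ : Fin n → SMap K L) (k : ℕ) : Prop :=
  ∃ Ω : Fin (k + 1) → K.Sub,
    (∀ s ∈ K.faces, ∃ j, s ∈ (Ω j).1.faces) ∧
    ∀ j i i', CClass ((φ i).restrict (Ω j)) ((φ i').restrict (Ω j))

/-- The `n`-th contiguity distance `SD(φ₁,…,φₙ)`, valued in `ℕ∞`. -/
noncomputable def SD {V W : Type} [DecidableEq W] {K : ASC V} {L : ASC W} {n : ℕ}
    (φ : Fin n → SMap K L) : ℕ∞ :=
  sInf {m : ℕ∞ | ∃ k : ℕ, m = (k : ℕ∞) ∧ SDle φ k}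

/-- `v` is a vertex of `K`. -/
def ASC.isVertex {V : Type} (K : ASC V) (v : V) : Prop :=
  ({v} : Finset V) ∈ K.faces

/-- The constant simplicial map at a vertex `v` of `L`. -/
def constMap {V W : Type} [DecidableEq W] (K : ASC V) (L : ASC W) {v : W}
    (hv : L.isVertex v) : SMap K L :=
  ⟨fun _ => v, by
    intro s hs
    rw [Finset.image_const (K.nonempty_of_mem hs) v]
    exact hv⟩

/-- The inclusion of a subcomplex. -/
def incl {V : Type} [DecidableEq V] {K : ASC V} (Ω : K.Sub) : SMap Ω.1 K :=
  ⟨fun x => x, by intro s hs; simpa using Ω.2 hs⟩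

/-- A subcomplex is categorical if its inclusion is in the same contiguity class
as a constant map. -/
def Categorical {V : Type} [DecidableEq V] {K : ASC V} (Ω : K.Sub) : Prop :=
  ∃ v : V, ∃ hv : K.isVertex v, CClass (incl Ω) (constMap Ω.1 K hv)

/-- `scatle K k` : `K` is covered by `k+1` categorical subcomplexes. -/
def scatle {V : Type} [DecidableEq V] (K : ASC V) (k : ℕ) : Prop :=
  ∃ Ω : Fin (k + 1) → K.Sub,
    (∀ s ∈ K.faces, ∃ j, s ∈ (Ω j).1.faces) ∧ ∀ j, Categorical (Ω j)

/-- The simplicial Lusternik–Schnirelmann category, valued in `ℕ∞`. -/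
noncomputable def scat {V : Type} [DecidableEq V] (K : ASC V) : ℕ∞ :=
  sInf {m : ℕ∞ | ∃ k : ℕ, m = (k : ℕ∞) ∧ scatle K k}

/-- The `n`-fold categorical product `Kⁿ`. -/
def ASC.prodPow {V : Type} [DecidableEq V] (K : ASC V) (n : ℕ) : ASC (Fin n → V) where
  faces := {s | s.Nonempty ∧ ∀ i : Fin n, s.image (fun f => f i) ∈ K.faces}
  nonempty_of_mem := fun h => h.1
  down_closed := by
    intro s t hs hts ht
    refine ⟨ht, fun i => ?_⟩
    exact K.down_closed (hs.2 i) (Finset.image_subset_image (f := fun f => f i) hts)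
      (ht.image _)

/-- Projection to the `i`-th factor of the categorical product. -/
def proj {V : Type} [DecidableEq V] (K : ASC V) (n : ℕ) (i : Fin n) :
    SMap (K.prodPow n) K :=
  ⟨fun f => f i, by intro s hs; exact hs.2 i⟩

/-- The diagonal simplicial map `K → Kⁿ`. -/
def diag {V : Type} [DecidableEq V] (K : ASC V) (n : ℕ) : SMap K (K.prodPow n) :=
  ⟨fun v _ => v, by
    intro s hs
    refine ⟨(K.nonempty_of_mem hs).image _, fun i => ?_⟩
    have h : (s.image fun v (_ : Fin n) => v).image (fun f => f i) = s := by
      rw [Finset.image_image]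
      exact Finset.image_id'
    rw [h]; exact hs⟩

/-- A subcomplex `Ω ⊆ Kⁿ` is `n`-Farber if the diagonal admits a section over `Ω`
up to contiguity class. -/
def IsFarber {V : Type} [DecidableEq V] {K : ASC V} {n : ℕ}
    (Ω : (K.prodPow n).Sub) : Prop :=
  ∃ σ : SMap Ω.1 K, CClass ((diag K n).comp σ) (incl Ω)

/-- `dTCle K n k` : `Kⁿ` is covered by `k+1` `n`-Farber subcomplexes. -/
def dTCle {V : Type} [DecidableEq V] (K : ASC V) (n k : ℕ) : Prop :=
  ∃ Ω : Fin (k + 1) → (K.prodPow n).Sub,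
    (∀ s ∈ (K.prodPow n).faces, ∃ j, s ∈ (Ω j).1.faces) ∧ ∀ j, IsFarber (Ω j)

/-- The `n`-th discrete topological complexity, valued in `ℕ∞`. -/
noncomputable def dTC {V : Type} [DecidableEq V] (K : ASC V) (n : ℕ) : ℕ∞ :=
  sInf {m : ℕ∞ | ∃ k : ℕ, m = (k : ℕ∞) ∧ dTCle K n k}

/-- `K` is edge-path connected: any two vertices are joined by a finite edge path. -/
def ASC.EPConn {V : Type} [DecidableEq V] (K : ASC V) : Prop :=
  ∀ u v : V, K.isVertex u → K.isVertex v →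
    Relation.ReflTransGen (fun a b => ({a, b} : Finset V) ∈ K.faces) u v

/-- `K` is strongly collapsible: the identity is in the same contiguity class as a
constant map. -/
def StronglyCollapsible {V : Type} [DecidableEq V] (K : ASC V) : Prop :=
  ∃ v : V, ∃ hv : K.isVertex v, CClass (SMap.id K) (constMap K K hv)

/-- `μ` is a right strong equivalence: it has a right strong homotopy inverse. -/
def RightStrongEq {V W : Type} [DecidableEq V] [DecidableEq W]
    {K : ASC V} {L : ASC W} (μ : SMap K L) : Prop :=
  ∃ α : SMap L K, CClass (μ.comp α) (SMap.id L)

/-- `μ` is a left strong equivalence: it has a left strong homotopy inverse. -/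
def LeftStrongEq {V W : Type} [DecidableEq V] [DecidableEq W]
    {K : ASC V} {L : ASC W} (μ : SMap K L) : Prop :=
  ∃ β : SMap L K, CClass (β.comp μ) (SMap.id K)

/-- The barycentric subdivision of `K`: vertices are the simplices of `K`, and
simplices are chains of simplices of `K`. -/
def ASC.sd {V : Type} (K : ASC V) : ASC (Finset V) where
  faces := {S | S.Nonempty ∧ (∀ σ ∈ S, σ ∈ K.faces) ∧
    ∀ σ ∈ S, ∀ τ ∈ S, σ ⊆ τ ∨ τ ⊆ σ}
  nonempty_of_mem := fun h => h.1
  down_closed := fun hS hTS hT =>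
    ⟨hT, fun σ hσ => hS.2.1 σ (hTS hσ), fun σ hσ τ hτ => hS.2.2 σ (hTS hσ) τ (hTS hτ)⟩

/-- The induced simplicial map on barycentric subdivisions. -/
def SMap.sd {V W : Type} [DecidableEq V] [DecidableEq W] {K : ASC V} {L : ASC W}
    (φ : SMap K L) : SMap K.sd L.sd :=
  ⟨fun σ => σ.image φ.toFun, by
    intro S hS
    refine ⟨hS.1.image _, ?_, ?_⟩
    · intro τ hτ
      simp only [Finset.mem_image] at hτ
      obtain ⟨σ, hσ, rfl⟩ := hτ
      exact φ.maps_faces (hS.2.1 σ hσ)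
    · intro τ₁ h₁ τ₂ h₂
      simp only [Finset.mem_image] at h₁ h₂
      obtain ⟨σ₁, hσ₁, rfl⟩ := h₁
      obtain ⟨σ₂, hσ₂, rfl⟩ := h₂
      rcases hS.2.2 σ₁ hσ₁ σ₂ hσ₂ with h | h
      · exact Or.inl (Finset.image_subset_image h)
      · exact Or.inr (Finset.image_subset_image h)⟩

theorem Equivalence.rel_of_forall_rel_succ {α : Type*} {R : α → α → Prop} (hR : Equivalence R)
    {n : ℕ} (f : Fin n → α)
    (h : ∀ (i : ℕ) (h : i + 1 < n), R (f ⟨i, Nat.lt_of_succ_lt h⟩) (f ⟨i + 1, h⟩))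
    (a b : Fin n) : R (f a) (f b) := by
  have from_zero : ∀ (i : ℕ) (hi : i < n), R (f ⟨0, Nat.zero_lt_of_lt hi⟩) (f ⟨i, hi⟩) := by
    intro i
    induction i with
    | zero => exact fun _ => hR.refl _
    | succ i ih => exact fun hi => hR.trans (ih (Nat.lt_of_succ_lt hi)) (h i hi)
  exact hR.trans (hR.symm (from_zero a a.2)) (from_zero b b.2)

section Contiguity

variable {V W : Type} [DecidableEq W] {K : ASC V} {L : ASC W}

theorem SMap.ext {φ ψ : SMap K L} (h : φ.toFun = ψ.toFun) : φ = ψ := by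
  cases φ; cases ψ; cases h; rfl

instance Contiguous.instSymm : Std.Symm (Contiguous (K := K) (L := L)) where
  symm _ _ h _ hs := by rw [Finset.union_comm]; exact h hs

theorem CClass.equivalence : Equivalence (CClass (K := K) (L := L)) where
  refl _ := Relation.ReflTransGen.refl
  symm h := Std.Symm.symm (r := Relation.ReflTransGen Contiguous) _ _ h
  trans := Relation.ReflTransGen.trans

theorem CClass.restrict {φ ψ : SMap K L} (h : CClass φ ψ) (Ω : K.Sub) :
    CClass (φ.restrict Ω) (ψ.restrict Ω) :=
  Relation.ReflTransGen.lift (p := Contiguous) (fun χ : SMap K L => χ.restrict Ω)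
    (fun _ _ hc _ hs => hc (Ω.2 hs)) _ _ h

theorem CClass.of_restrict {Ω : K.Sub} (hΩ : K.faces ⊆ Ω.1.faces) {φ ψ : SMap K L}
    (h : CClass (φ.restrict Ω) (ψ.restrict Ω)) : CClass φ ψ := by
  let extend : SMap Ω.1 L → SMap K L := fun χ => ⟨χ.toFun, fun hs => χ.maps_faces (hΩ hs)⟩
  have hlift : CClass (extend (φ.restrict Ω)) (extend (ψ.restrict Ω)) :=
    Relation.ReflTransGen.lift (p := Contiguous) extend (fun _ _ hc _ hs => hc (hΩ hs)) _ _ h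
  rwa [show extend (φ.restrict Ω) = φ from SMap.ext rfl,
    show extend (ψ.restrict Ω) = ψ from SMap.ext rfl] at hlift

theorem SDle_zero_iff {n : ℕ} (φ : Fin n → SMap K L) :
    SDle φ 0 ↔ ∀ i i', CClass (φ i) (φ i') := by
  constructor
  · rintro ⟨Ω, hcover, hclass⟩ i i'
    have hΩ : K.faces ⊆ (Ω 0).1.faces := fun s hs => by
      obtain ⟨j, hj⟩ := hcover s hs
      rwa [Fin.fin_one_eq_zero j] at hj
    exact (hclass 0 i i').of_restrict hΩ
  · intro h
    exact ⟨fun _ => ⟨K, subset_rfl⟩, fun s hs => ⟨0, hs⟩, fun _ i i' => (h i i').restrict _⟩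

theorem SD_eq_zero_iff_SDle_zero {n : ℕ} (φ : Fin n → SMap K L) : SD φ = 0 ↔ SDle φ 0 := by
  simp only [SD, ENat.sInf_eq_zero, Set.mem_ofPred_eq]
  constructor
  · rintro ⟨k, hk, hle⟩
    rwa [Nat.cast_eq_zero.mp hk.symm] at hle
  · exact fun h => ⟨0, rfl, h⟩

end Contiguity

/-- `SD(φ₁,…,φₙ) = 0` iff consecutive maps are in the same
contiguity class. -/
theorem SD_eq_zero_iff {V W : Type} [DecidableEq W] {K : ASC V} {L : ASC W}
    {n : ℕ} (φ : Fin n → SMap K L) :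
    SD φ = 0 ↔ ∀ (i : ℕ) (h : i + 1 < n),
      CClass (φ ⟨i, Nat.lt_of_succ_lt h⟩) (φ ⟨i + 1, h⟩) := by
  rw [SD_eq_zero_iff_SDle_zero, SDle_zero_iff]
  exact ⟨fun h i hi => h _ _, CClass.equivalence.rel_of_forall_rel_succ φ⟩
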